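/- Shinar–Feinberg-type theorem for PL-RDK systems: Let N = (S, C, R) be a deficiency-one chemical reaction network and suppose (N, K) is a power law kinetic system with reactant-determined interactions (PL-RDK) with T-matrix T that admits a positive equilibrium. If y, y' ∈ C are nonterminal complexes whose kinetic order vectors differ only in species X_i (i.e., T_{·,y} − T_{·,y'} = a·e_i for some nonzero real a, where e_i is the standard basis vector of species X_i), then the system has absolute concentration robustness in X_i: for any two positive equilibria c*, c** ∈ ℝ^S_{>0} of the system, c*_i = c**_i. -/

import Mathlib

open scoped BigOperators Classical

/-- A chemical reaction network (CRN) on a finite species set `S`: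
complexes are non-negative vectors in `ℝ^S`, reactions are pairs of complexes,
no reaction is a self-loop, and every complex occurs in some reaction. -/
structure CRN (S : Type*) [Fintype S] where
  complexes : Finset (S → ℝ)
  reactions : Finset ((S → ℝ) × (S → ℝ))
  complexes_nonneg : ∀ y ∈ complexes, ∀ i, 0 ≤ y i
  mem_source : ∀ r ∈ reactions, r.1 ∈ complexes
  mem_target : ∀ r ∈ reactions, r.2 ∈ complexes
  ne_of_mem : ∀ r ∈ reactions, r.1 ≠ r.2
  cover : ∀ y ∈ complexes, ∃ y', (y, y') ∈ reactions ∨ (y', y) ∈ reactions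

namespace CRN

variable {S : Type*} [Fintype S] (N : CRN S)

/-- One-step reaction relation on complexes. -/
def step (y y' : S → ℝ) : Prop := (y, y') ∈ N.reactions

/-- Reachability along directed reactions. -/
def reach : (S → ℝ) → (S → ℝ) → Prop := Relation.ReflTransGen N.step

/-- A complex is terminal iff it belongs to a terminal strong linkage class,
i.e. everything reachable from it can reach it back. -/
def IsTerminal (y : S → ℝ) : Prop :=
  y ∈ N.complexes ∧ ∀ y', N.reach y y' → N.reach y' y

/-- A nonterminal complex. -/
def Nonterminal (y : S → ℝ) : Prop := y ∈ N.complexes ∧ ¬ N.IsTerminal y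

/-- The set of terminal strong linkage classes. -/
def tslc : Set (Set (S → ℝ)) :=
  {L | ∃ y, N.IsTerminal y ∧ L = {y' | N.reach y y' ∧ N.reach y' y}}

/-- The number `t` of terminal strong linkage classes. -/
noncomputable def numTSLC : ℕ := Nat.card N.tslc

/-- Undirected connectivity (for linkage classes). -/
def linked : (S → ℝ) → (S → ℝ) → Prop :=
  Relation.ReflTransGen (fun a b => (a, b) ∈ N.reactions ∨ (b, a) ∈ N.reactions)

/-- The set of linkage classes (connected components of the reaction digraph). -/
def linkageClasses : Set (Set (S → ℝ)) :=
  {L | ∃ y ∈ N.complexes, L = {y' | y' ∈ N.complexes ∧ N.linked y y'}}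

/-- The number `ℓ` of linkage classes. -/
noncomputable def numLinkageClasses : ℕ := Nat.card N.linkageClasses

/-- The stoichiometric subspace `S = span{y' - y : y → y'}`. -/
def stoichSubspace : Submodule ℝ (S → ℝ) :=
  Submodule.span ℝ {v | ∃ r ∈ N.reactions, v = r.2 - r.1}

/-- The rank `s` of the network. -/
noncomputable def rank : ℕ := Module.finrank ℝ N.stoichSubspace

/-- The deficiency `δ = n - ℓ - s`. -/
noncomputable def deficiency : ℤ :=
  (N.complexes.card : ℤ) - N.numLinkageClasses - N.rank

/-- The map of complexes `Y : ℝ^C → ℝ^S`, sending `ω_y ↦ y`. -/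
noncomputable def mapY : (↥N.complexes → ℝ) →ₗ[ℝ] (S → ℝ) :=
  ∑ y : ↥N.complexes, (LinearMap.proj y).smulRight (y : S → ℝ)

/-- The incidence map `I_a : ℝ^R → ℝ^C`, sending `ω_{y→y'} ↦ ω_{y'} - ω_y`. -/
noncomputable def incidence : (↥N.reactions → ℝ) →ₗ[ℝ] (↥N.complexes → ℝ) :=
  ∑ r : ↥N.reactions,
    (LinearMap.proj r).smulRight
      (Pi.single (⟨r.1.2, N.mem_target r.1 r.2⟩ : ↥N.complexes) 1
        - Pi.single (⟨r.1.1, N.mem_source r.1 r.2⟩ : ↥N.complexes) 1)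

/-- The Laplacian map `A_k x = Σ_{y→y'} k_{y→y'} x_y (ω_{y'} - ω_y)`. -/
noncomputable def laplacian (k : ↥N.reactions → ℝ) :
    (↥N.complexes → ℝ) →ₗ[ℝ] (↥N.complexes → ℝ) :=
  ∑ r : ↥N.reactions, k r •
    ((LinearMap.proj (⟨r.1.1, N.mem_source r.1 r.2⟩ : ↥N.complexes)).smulRight
      (Pi.single (⟨r.1.2, N.mem_target r.1 r.2⟩ : ↥N.complexes) 1
        - Pi.single (⟨r.1.1, N.mem_source r.1 r.2⟩ : ↥N.complexes) 1))

/-- A positive equilibrium of the PL-RDK system with rate constants `k` and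
kinetic-order assignment (T-matrix) `T`. -/
def IsPosEquilibrium (k : ↥N.reactions → ℝ) (T : (S → ℝ) → (S → ℝ)) (c : S → ℝ) : Prop :=
  (∀ i, 0 < c i) ∧
    ∑ r : ↥N.reactions, (k r * ∏ i, (c i) ^ (T r.1.1 i)) • ((r.1.2 : S → ℝ) - r.1.1) = 0

/-- The set of reactant complexes. -/
def reactantSet : Set (S → ℝ) := {y | ∃ y', (y, y') ∈ N.reactions}

/-- The reactant subspace `R = Im Y_res`. -/
def reactantSubspace : Submodule ℝ (S → ℝ) := Submodule.span ℝ N.reactantSet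

/-- The reactant deficiency `δ_ρ = n_r - q`. -/
noncomputable def reactantDeficiency : ℤ :=
  (Nat.card N.reactantSet : ℤ) - Module.finrank ℝ N.reactantSubspace

end CRN

/-!
At a positive equilibrium `c` the vector of monomials `Ψ_c = (c ^ T_{·,y})_{y ∈ C}` satisfies
`Y (A_k Ψ_c) = 0`, and `A_k Ψ_c = I_a (k · Ψ_c ∘ source)` lies in the image of the incidence map.
Since `im I_a ⊆ ker (linkage-class sums)`, the space `ker Y ∩ im I_a` has dimension at most
`n - ℓ - s = δ = 1`. Elements of `ker A_k` vanish on nonterminal complexes, and `Ψ_c > 0`, so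
`A_k Ψ_c ≠ 0`; hence for a second equilibrium `c'` we get `A_k Ψ_{c'} = b • A_k Ψ_c`, i.e.
`Ψ_{c'} = b Ψ_c` on nonterminal complexes. Comparing `y` with `y'` and taking logarithms gives
`a (log c'_i - log c_i) = 0`.
-/

section LinearAlgebra

variable {K V W : Type*} [DivisionRing K] [AddCommGroup V] [Module K V] [AddCommGroup W]
  [Module K W]

lemma Submodule.finrank_ker_inf_add_finrank_map [FiniteDimensional K V] (f : V →ₗ[K] W)
    (p : Submodule K V) :
    Module.finrank K ↥(LinearMap.ker f ⊓ p) + Module.finrank K ↥(p.map f) =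
      Module.finrank K p := by
  have := LinearMap.finrank_range_add_finrank_ker (f.domRestrict p)
  rw [LinearMap.range_domRestrict, LinearMap.ker_domRestrict] at this
  rw [← this, add_comm, ← (Submodule.comapSubtypeEquivOfLe inf_le_right).finrank_eq,
    Submodule.comap_inf, Submodule.comap_subtype_self, inf_top_eq]

lemma Submodule.exists_smul_eq_of_finrank_le_one {p : Submodule K V} [FiniteDimensional K p]
    (hp : Module.finrank K p ≤ 1) {v u : V} (hv : v ∈ p) (hv0 : v ≠ 0) (hu : u ∈ p) :
    ∃ a : K, a • v = u := by
  have hspan : K ∙ v = p := Submodule.eq_of_le_of_finrank_le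
    ((Submodule.span_singleton_le_iff_mem v p).2 hv) (by rwa [finrank_span_singleton hv0])
  exact Submodule.mem_span_singleton.1 (hspan ▸ hu)

end LinearAlgebra

namespace CRN

variable {S : Type*} [Fintype S] (N : CRN S)

section Terminal

variable {N}

lemma reach_mem {y z : S → ℝ} (hy : y ∈ N.complexes) (h : N.reach y z) : z ∈ N.complexes := by
  induction h with
  | refl => exact hy
  | tail _ e _ => exact N.mem_target _ e

lemma IsTerminal.of_step {y z : S → ℝ} (hy : N.IsTerminal y) (e : N.step y z) :
    N.IsTerminal z :=
  ⟨N.mem_target _ e, fun _ hz => (hy.2 _ (hz.head e)).trans (.single e)⟩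

lemma exists_isTerminal_reach {y : S → ℝ} (hy : y ∈ N.complexes) :
    ∃ t, N.IsTerminal t ∧ N.reach y t := by
  -- a successor of `y` with fewest successors is terminal
  set succ : (S → ℝ) → Finset (S → ℝ) := fun z => N.complexes.filter (N.reach z)
  have mem_succ {z u} : u ∈ succ z ↔ u ∈ N.complexes ∧ N.reach z u := Finset.mem_filter
  obtain ⟨t, ht, hmin⟩ := (succ y).exists_min_image (fun z => (succ z).card)
    ⟨y, mem_succ.2 ⟨hy, .refl⟩⟩
  obtain ⟨htC, hyt⟩ := mem_succ.1 ht
  refine ⟨t, ⟨htC, fun z htz => ?_⟩, hyt⟩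
  have hsub : succ z ⊆ succ t := fun u hu =>
    mem_succ.2 ⟨(mem_succ.1 hu).1, htz.trans (mem_succ.1 hu).2⟩
  have heq := Finset.eq_of_subset_of_card_le hsub
    (hmin z (mem_succ.2 ⟨reach_mem htC htz, hyt.trans htz⟩))
  exact (mem_succ.1 (heq ▸ mem_succ.2 ⟨htC, .refl⟩ : t ∈ succ z)).2

end Terminal

section Laplacian

variable {N}

def src (r : ↥N.reactions) : ↥N.complexes := ⟨r.1.1, N.mem_source r.1 r.2⟩

def tgt (r : ↥N.reactions) : ↥N.complexes := ⟨r.1.2, N.mem_target r.1 r.2⟩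

lemma step_src_tgt (r : ↥N.reactions) : N.step (N.src r) (N.tgt r) := r.2

variable (k : ↥N.reactions → ℝ)

lemma laplacian_apply (w : ↥N.complexes → ℝ) (z : ↥N.complexes) :
    N.laplacian k w z = ∑ r, k r * w (N.src r) *
      ((if N.tgt r = z then 1 else 0) - if N.src r = z then 1 else 0) := by
  simp only [laplacian, LinearMap.sum_apply, LinearMap.smul_apply, LinearMap.smulRight_apply,
    LinearMap.proj_apply, Finset.sum_apply, Pi.smul_apply, Pi.sub_apply, Pi.single_apply,
    smul_eq_mul, src, tgt, eq_comm (a := z), mul_assoc]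
  -- the two sides differ only in their `Decidable` instances
  congr! 1

lemma laplacian_apply_eq_inflow_sub_outflow (w : ↥N.complexes → ℝ) (z : ↥N.complexes) :
    N.laplacian k w z = ∑ r with N.tgt r = z, k r * w (N.src r) -
      (∑ r with N.src r = z, k r) * w z := by
  rw [laplacian_apply, Finset.sum_filter, Finset.sum_filter, Finset.sum_mul,
    ← Finset.sum_sub_distrib]
  refine Finset.sum_congr rfl fun r _ => ?_
  by_cases h : N.src r = z <;> simp [h, mul_sub]

lemma sum_laplacian_apply (w : ↥N.complexes → ℝ) (M : Finset ↥N.complexes) :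
    ∑ z ∈ M, N.laplacian k w z = ∑ r, k r * w (N.src r) *
      ((if N.tgt r ∈ M then 1 else 0) - if N.src r ∈ M then 1 else 0) := by
  simp only [laplacian_apply, mul_sub, Finset.sum_sub_distrib]
  rw [Finset.sum_comm, Finset.sum_comm (s := M)]
  simp [Finset.sum_ite_eq]

lemma laplacian_abs_eq_zero (hk : ∀ r, 0 ≤ k r) {w : ↥N.complexes → ℝ}
    (hw : N.laplacian k w = 0) : N.laplacian k (fun z => |w z|) = 0 := by
  have hnonneg : ∀ z, 0 ≤ N.laplacian k (fun z => |w z|) z := by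
    intro z
    have hbalance := congrFun hw z
    rw [Pi.zero_apply, laplacian_apply_eq_inflow_sub_outflow, sub_eq_zero] at hbalance
    have hout : 0 ≤ ∑ r with N.src r = z, k r := Finset.sum_nonneg fun r _ => hk r
    rw [laplacian_apply_eq_inflow_sub_outflow, sub_nonneg, ← abs_of_nonneg hout, ← abs_mul,
      ← hbalance]
    refine (Finset.abs_sum_le_sum_abs _ _).trans_eq (Finset.sum_congr rfl fun r _ => ?_)
    rw [abs_mul, abs_of_nonneg (hk r)]
  have htotal : ∑ z, N.laplacian k (fun z => |w z|) z = 0 := by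
    simp [sum_laplacian_apply]
  funext z
  exact (Finset.sum_eq_zero_iff_of_nonneg fun z _ => hnonneg z).1 htotal z (Finset.mem_univ z)

end Laplacian

section Nonneg

variable {N} {k : ↥N.reactions → ℝ} {u : ↥N.complexes → ℝ}

lemma pos_tgt_of_pos_src (hk : ∀ r, 0 < k r) (hu : ∀ z, 0 ≤ u z) (hAu : N.laplacian k u = 0)
    (r : ↥N.reactions) (hr : 0 < u (N.src r)) : 0 < u (N.tgt r) := by
  have hbalance := congrFun hAu (N.tgt r)
  rw [Pi.zero_apply, laplacian_apply_eq_inflow_sub_outflow, sub_eq_zero] at hbalance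
  have hinflow : k r * u (N.src r) ≤ ∑ r' with N.tgt r' = N.tgt r, k r' * u (N.src r') :=
    Finset.single_le_sum (f := fun r' => k r' * u (N.src r'))
      (fun r' _ => mul_nonneg (hk r').le (hu _)) (Finset.mem_filter.2 ⟨Finset.mem_univ _, rfl⟩)
  refine (hu _).lt_of_ne fun h => ?_
  rw [hbalance, ← h, mul_zero] at hinflow
  exact (mul_pos (hk r) hr).not_ge hinflow

lemma apply_src_eq_zero_of_isTerminal_tgt (hk : ∀ r, 0 < k r) (hu : ∀ z, 0 ≤ u z)
    (hAu : N.laplacian k u = 0) (r : ↥N.reactions)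
    (hsrc : ¬ N.IsTerminal (N.src r)) (htgt : N.IsTerminal (N.tgt r)) : u (N.src r) = 0 := by
  set M : Finset ↥N.complexes := {z | ¬ N.IsTerminal z}
  have hmem {z} : z ∈ M ↔ ¬ N.IsTerminal z := by simp [M]
  have hleak : ∑ r, k r * u (N.src r) *
      ((if N.tgt r ∈ M then 1 else 0) - if N.src r ∈ M then 1 else 0) = 0 := by
    rw [← sum_laplacian_apply, hAu]
    simp
  have hnonpos : ∀ r ∈ Finset.univ, k r * u (N.src r) *
      ((if N.tgt r ∈ M then 1 else 0) - if N.src r ∈ M then 1 else 0) ≤ 0 := by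
    intro r _
    refine mul_nonpos_of_nonneg_of_nonpos (mul_nonneg (hk r).le (hu _)) ?_
    by_cases h : N.tgt r ∈ M
    · simp [h, hmem.2 fun hs => hmem.1 h (hs.of_step (N.step_src_tgt r))]
    · split_ifs <;> norm_num
  have := (Finset.sum_eq_zero_iff_of_nonpos hnonpos).1 hleak r (Finset.mem_univ r)
  rw [if_neg (hmem.not.2 (not_not.2 htgt)), if_pos (hmem.2 hsrc)] at this
  simpa [(hk r).ne'] using this

end Nonneg

/-- After replacing `w` by `|w|`, positivity propagates forward along reactions, hence from a
nonterminal complex to a terminal one; but no mass can leak out of the nonterminal complexes. -/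
lemma laplacian_eq_zero_apply_of_not_isTerminal {k : ↥N.reactions → ℝ} (hk : ∀ r, 0 < k r)
    {w : ↥N.complexes → ℝ} (hw : N.laplacian k w = 0) {z : ↥N.complexes}
    (hz : ¬ N.IsTerminal z) : w z = 0 := by
  set u : ↥N.complexes → ℝ := fun z => |w z|
  have hu : ∀ z, 0 ≤ u z := fun z => abs_nonneg (w z)
  have hAu : N.laplacian k u = 0 := N.laplacian_abs_eq_zero k (fun r => (hk r).le) hw
  by_contra hwz
  have hforward : ∀ x, N.reach z x →
      ∃ hx : x ∈ N.complexes, ¬ N.IsTerminal x ∧ 0 < u ⟨x, hx⟩ := by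
    intro x hx
    induction hx with
    | refl => exact ⟨z.2, hz, abs_pos.2 hwz⟩
    | @tail b x _ e ih =>
      obtain ⟨hb, hbT, hub⟩ := ih
      let r : ↥N.reactions := ⟨(b, x), e⟩
      have hpos : 0 < u (N.tgt r) := pos_tgt_of_pos_src hk hu hAu r hub
      refine ⟨(N.tgt r).2, fun hxT => hub.ne' ?_, hpos⟩
      exact apply_src_eq_zero_of_isTerminal_tgt hk hu hAu r hbT hxT
  obtain ⟨t, htT, hzt⟩ := exists_isTerminal_reach z.2
  exact (hforward t hzt).2.1 htT

section LinkageClasses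

def linkageClassOf (y : ↥N.complexes) : ↥N.linkageClasses :=
  ⟨{y' | y' ∈ N.complexes ∧ N.linked y y'}, y, y.2, rfl⟩

lemma linkageClassOf_surjective : Function.Surjective N.linkageClassOf := by
  rintro ⟨_, y, hy, rfl⟩
  exact ⟨⟨y, hy⟩, rfl⟩

noncomputable instance : Fintype ↥N.linkageClasses :=
  have : Finite ↥N.linkageClasses := .of_surjective _ N.linkageClassOf_surjective
  .ofFinite _

lemma linkageClassOf_tgt (r : ↥N.reactions) :
    N.linkageClassOf (N.tgt r) = N.linkageClassOf (N.src r) := by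
  have hsrc : N.linked (N.src r) (N.tgt r) := .single (.inl r.2)
  have htgt : N.linked (N.tgt r) (N.src r) := .single (.inr r.2)
  exact Subtype.ext (Set.ext fun y => and_congr_right fun _ => ⟨hsrc.trans, htgt.trans⟩)

noncomputable def linkageClassSum : (↥N.complexes → ℝ) →ₗ[ℝ] (↥N.linkageClasses → ℝ) :=
  ∑ y : ↥N.complexes, (LinearMap.proj y).smulRight (Pi.single (N.linkageClassOf y) 1)

lemma linkageClassSum_single (y : ↥N.complexes) (a : ℝ) :
    N.linkageClassSum (Pi.single y a) = Pi.single (N.linkageClassOf y) a := by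
  simp only [linkageClassSum, LinearMap.sum_apply, LinearMap.smulRight_apply,
    LinearMap.proj_apply]
  rw [Finset.sum_eq_single y (fun b _ hb => by simp [hb]) (by simp)]
  simp [← Pi.single_smul']

lemma linkageClassSum_surjective : Function.Surjective N.linkageClassSum := by
  intro t
  choose rep hrep using N.linkageClassOf_surjective
  refine ⟨∑ L, Pi.single (rep L) (t L), ?_⟩
  simp [map_sum, linkageClassSum_single, hrep, Finset.univ_sum_single]

lemma incidence_apply (x : ↥N.reactions → ℝ) :
    N.incidence x = ∑ r, x r • (Pi.single (N.tgt r) 1 - Pi.single (N.src r) 1) := by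
  simp only [incidence, LinearMap.sum_apply, LinearMap.smulRight_apply, LinearMap.proj_apply,
    src, tgt]

lemma range_incidence_le_ker_linkageClassSum :
    LinearMap.range N.incidence ≤ LinearMap.ker N.linkageClassSum := by
  rintro _ ⟨x, rfl⟩
  simp [incidence_apply, map_sum, linkageClassSum_single, linkageClassOf_tgt]

lemma finrank_ker_linkageClassSum :
    Module.finrank ℝ (LinearMap.ker N.linkageClassSum) + N.numLinkageClasses =
      N.complexes.card := by
  have := LinearMap.finrank_range_add_finrank_ker N.linkageClassSum
  rw [LinearMap.range_eq_top.2 N.linkageClassSum_surjective, finrank_top,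
    Module.finrank_fintype_fun_eq_card, Module.finrank_fintype_fun_eq_card,
    Fintype.card_coe] at this
  rw [numLinkageClasses, Nat.card_eq_fintype_card]
  omega

end LinkageClasses

section Deficiency

lemma mapY_single (y : ↥N.complexes) (a : ℝ) : N.mapY (Pi.single y a) = a • (y : S → ℝ) := by
  simp only [mapY, LinearMap.sum_apply, LinearMap.smulRight_apply, LinearMap.proj_apply]
  rw [Finset.sum_eq_single y (fun b _ hb => by simp [hb]) (by simp)]
  simp

lemma mapY_incidence (x : ↥N.reactions → ℝ) :
    N.mapY (N.incidence x) = ∑ r, x r • ((N.tgt r : S → ℝ) - N.src r) := by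
  simp [incidence_apply, map_sum, mapY_single]

lemma map_mapY_range_incidence :
    (LinearMap.range N.incidence).map N.mapY = N.stoichSubspace := by
  apply le_antisymm
  · rintro _ ⟨_, ⟨x, rfl⟩, rfl⟩
    rw [mapY_incidence]
    exact Submodule.sum_mem _ fun r _ =>
      Submodule.smul_mem _ _ (Submodule.subset_span ⟨r.1, r.2, rfl⟩)
  · rw [stoichSubspace, Submodule.span_le]
    rintro _ ⟨p, hp, rfl⟩
    refine ⟨N.incidence (Pi.single ⟨p, hp⟩ 1), ⟨_, rfl⟩, ?_⟩
    rw [mapY_incidence, Finset.sum_eq_single ⟨p, hp⟩ (fun b _ hb => by simp [hb]) (by simp)]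
    simp [src, tgt]

lemma laplacian_eq_incidence (k : ↥N.reactions → ℝ) (w : ↥N.complexes → ℝ) :
    N.laplacian k w = N.incidence fun r => k r * w (N.src r) := by
  simp only [laplacian, incidence_apply, LinearMap.sum_apply, LinearMap.smul_apply,
    LinearMap.smulRight_apply, LinearMap.proj_apply, smul_smul, src, tgt]

lemma finrank_ker_mapY_inf_range_incidence_le :
    (Module.finrank ℝ ↥(LinearMap.ker N.mapY ⊓ LinearMap.range N.incidence) : ℤ) ≤
      N.deficiency := by
  have hrank := (LinearMap.range N.incidence).finrank_ker_inf_add_finrank_map N.mapY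
  rw [map_mapY_range_incidence] at hrank
  have hle := Submodule.finrank_mono N.range_incidence_le_ker_linkageClassSum
  have hker := N.finrank_ker_linkageClassSum
  rw [deficiency, rank]
  omega

end Deficiency

section Equilibria

variable {N}

noncomputable def monomials (T : (S → ℝ) → (S → ℝ)) (c : S → ℝ) : ↥N.complexes → ℝ :=
  fun y => ∏ j, c j ^ T y j

variable {k : ↥N.reactions → ℝ} {T : (S → ℝ) → (S → ℝ)} {c : S → ℝ}

lemma monomials_pos (hc : ∀ j, 0 < c j) (y : ↥N.complexes) : 0 < N.monomials T c y :=
  Finset.prod_pos fun j _ => Real.rpow_pos_of_pos (hc j) _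

lemma log_monomials (hc : ∀ j, 0 < c j) (y : ↥N.complexes) :
    Real.log (N.monomials T c y) = ∑ j, T y j * Real.log (c j) := by
  rw [monomials, Real.log_prod fun j _ => (Real.rpow_pos_of_pos (hc j) _).ne']
  exact Finset.sum_congr rfl fun j _ => Real.log_rpow (hc j) _

lemma laplacian_monomials_mem (hc : N.IsPosEquilibrium k T c) :
    N.laplacian k (N.monomials T c) ∈ LinearMap.ker N.mapY ⊓ LinearMap.range N.incidence := by
  rw [laplacian_eq_incidence]
  refine ⟨?_, _, rfl⟩
  rw [SetLike.mem_coe, LinearMap.mem_ker, mapY_incidence, ← hc.2]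
  rfl

variable {c' : S → ℝ}

lemma exists_monomials_eq_mul_of_not_isTerminal (hδ : N.deficiency ≤ 1) (hk : ∀ r, 0 < k r)
    (hc : N.IsPosEquilibrium k T c) (hc' : N.IsPosEquilibrium k T c') :
    ∃ b : ℝ, ∀ y : ↥N.complexes, ¬ N.IsTerminal y →
      N.monomials T c' y = b * N.monomials T c y := by
  by_cases h0 : N.laplacian k (N.monomials T c) = 0
  · exact ⟨0, fun y hy => absurd (N.laplacian_eq_zero_apply_of_not_isTerminal hk h0 hy)
      (monomials_pos hc.1 y).ne'⟩
  have hdim : Module.finrank ℝ ↥(LinearMap.ker N.mapY ⊓ LinearMap.range N.incidence) ≤ 1 := by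
    have := N.finrank_ker_mapY_inf_range_incidence_le
    omega
  obtain ⟨b, hb⟩ := Submodule.exists_smul_eq_of_finrank_le_one hdim
    (laplacian_monomials_mem hc) h0 (laplacian_monomials_mem hc')
  refine ⟨b, fun y hy => ?_⟩
  have hker : N.laplacian k (N.monomials T c' - b • N.monomials T c) = 0 := by
    rw [map_sub, map_smul, hb, sub_self]
  simpa [sub_eq_zero] using N.laplacian_eq_zero_apply_of_not_isTerminal hk hker hy

lemma sum_sub_mul_log_sub_eq_zero (hc : ∀ j, 0 < c j) (hc' : ∀ j, 0 < c' j) {b : ℝ}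
    {y y' : ↥N.complexes} (hy : N.monomials T c' y = b * N.monomials T c y)
    (hy' : N.monomials T c' y' = b * N.monomials T c y') :
    ∑ j, (T y j - T y' j) * (Real.log (c' j) - Real.log (c j)) = 0 := by
  have hcross : N.monomials T c' y * N.monomials T c y' =
      N.monomials T c' y' * N.monomials T c y := by
    rw [hy, hy']
    ring
  have hlog := congrArg Real.log hcross
  rw [Real.log_mul (monomials_pos hc' y).ne' (monomials_pos hc y').ne',
    Real.log_mul (monomials_pos hc' y').ne' (monomials_pos hc y).ne',
    log_monomials hc, log_monomials hc, log_monomials hc', log_monomials hc'] at hlog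
  simp only [sub_mul, mul_sub, Finset.sum_sub_distrib]
  linarith

end Equilibria

end CRN

theorem shinar_feinberg_PLRDK_general {S : Type*} [Fintype S] [DecidableEq S] (N : CRN S)
    (hδ : N.deficiency = 1)
    (k : ↥N.reactions → ℝ) (hk : ∀ r, 0 < k r)
    (T : (S → ℝ) → (S → ℝ))
    (y y' : S → ℝ) (hy : N.Nonterminal y) (hy' : N.Nonterminal y')
    (i : S) (a : ℝ) (ha : a ≠ 0)
    (hT : (fun j => T y j - T y' j) = Pi.single i a) :
    ∀ c c' : S → ℝ, N.IsPosEquilibrium k T c → N.IsPosEquilibrium k T c' →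
      c i = c' i := by
  intro c c' hc hc'
  obtain ⟨b, hb⟩ := N.exists_monomials_eq_mul_of_not_isTerminal hδ.le hk hc hc'
  have hsum := CRN.sum_sub_mul_log_sub_eq_zero hc.1 hc'.1
    (hb ⟨y, hy.1⟩ hy.2) (hb ⟨y', hy'.1⟩ hy'.2)
  have hlog : a * (Real.log (c' i) - Real.log (c i)) = 0 := by
    rw [← hsum]
    simp [congrFun hT, Pi.single_apply]
  have hlog_eq := sub_eq_zero.1 ((mul_eq_zero.1 hlog).resolve_left ha)
  exact Real.log_injOn_pos (hc.1 i) (hc'.1 i) hlog_eq.symm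

/-- **Shinar–Feinberg-type theorem for PL-RDK systems.**
Let `N` be a deficiency-one CRN with PL-RDK kinetics (rate constants `k`,
T-matrix `T`) admitting a positive equilibrium.  If `y, y'` are nonterminal
complexes whose kinetic order vectors differ only in species `i`
(`T_{·,y} − T_{·,y'} = a • e_i`, `a ≠ 0`), then the system has absolute
concentration robustness in species `i`. -/
theorem shinar_feinberg_PLRDK {S : Type*} [Fintype S] [DecidableEq S] (N : CRN S)
    (hδ : N.deficiency = 1)
    (k : ↥N.reactions → ℝ) (hk : ∀ r, 0 < k r)
    (T : (S → ℝ) → (S → ℝ))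
    (hex : ∃ c, N.IsPosEquilibrium k T c)
    (y y' : S → ℝ) (hy : N.Nonterminal y) (hy' : N.Nonterminal y')
    (i : S) (a : ℝ) (ha : a ≠ 0)
    (hT : (fun j => T y j - T y' j) = Pi.single i a) :
    ∀ c c' : S → ℝ, N.IsPosEquilibrium k T c → N.IsPosEquilibrium k T c' →
      c i = c' i :=
  shinar_feinberg_PLRDK_general N hδ k hk T y y' hy hy' i a ha hT
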